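/- Let F_A be a free group on a set A with |A| > 1 and let κ = |F_A|. Then there exists a subset T of F_A (namely the complement of the set of reduced words beginning and ending with a letter from {a, a⁻¹} for a fixed a ∈ A) such that T is both left κ-thick and right κ-thick, but T is not κ-thick. -/

import Mathlib

/-!
Write `T` for the set of elements whose reduced word does not both begin and end with `a^{±1}`.
Given fewer than `|F_A|` elements `f`, choose a letter `b ≠ a` and `n` exceeding the number of
`b⁻¹`s in each reduced word of an `f`; then every `bⁿ f` begins with `b`, so `bⁿ` witnesses right
thickness. For finite such sets any `b ≠ a` works; an infinite one has fewer than `|A|` elements,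
so some letter `b ≠ a` occurs in none of them and `n = 1` suffices. Since `T` is closed under
inversion, it is left thick as well. It is not thick, as witnessed by `{a, a⁻¹}`: for every `t`
the signs can be chosen so that `a^{±1} t a^{±1}` is reduced as written.
-/

open scoped Pointwise
open Cardinal

universe u

variable {G : Type u}

/-- `A` is left `κ`-large: `G = F * A` for some `F` with `|F| < κ`. -/
def LeftLarge [Group G] (κ : Cardinal.{u}) (A : Set G) : Prop :=
  ∃ F : Set G, #F < κ ∧ F * A = Set.univ

/-- `A` is right `κ`-large: `G = A * F` for some `F` with `|F| < κ`. -/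
def RightLarge [Group G] (κ : Cardinal.{u}) (A : Set G) : Prop :=
  ∃ F : Set G, #F < κ ∧ A * F = Set.univ

/-- `A` is `κ`-large: `G = F * A * F` for some `F` with `|F| < κ`. -/
def KLarge [Group G] (κ : Cardinal.{u}) (A : Set G) : Prop :=
  ∃ F : Set G, #F < κ ∧ F * A * F = Set.univ

/-- `A` is left `κ`-thick: for every `F` with `|F| < κ` there is `a ∈ A` with `F * a ⊆ A`. -/
def LeftThick [Group G] (κ : Cardinal.{u}) (A : Set G) : Prop :=
  ∀ F : Set G, #F < κ → ∃ a ∈ A, F * {a} ⊆ A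

/-- `A` is right `κ`-thick: for every `F` with `|F| < κ` there is `a ∈ A` with `a * F ⊆ A`. -/
def RightThick [Group G] (κ : Cardinal.{u}) (A : Set G) : Prop :=
  ∀ F : Set G, #F < κ → ∃ a ∈ A, {a} * F ⊆ A

/-- `A` is `κ`-thick: for every `F` with `|F| < κ` there is `a ∈ A` with `F * a * F ⊆ A`. -/
def KThick [Group G] (κ : Cardinal.{u}) (A : Set G) : Prop :=
  ∀ F : Set G, #F < κ → ∃ a ∈ A, F * {a} * F ⊆ A

/-- `G` is `κ`-normal: every subset of size `< κ` lies in a normal subgroup of size `< κ`. -/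
def KNormal (G : Type u) [Group G] (κ : Cardinal.{u}) : Prop :=
  ∀ F : Set G, #F < κ → ∃ H : Subgroup G, H.Normal ∧ #(H : Set G) < κ ∧ F ⊆ (H : Set G)

/-- `κ` is a singular cardinal: infinite, with cofinality strictly less than `κ`. -/
def Singular (κ : Cardinal.{u}) : Prop := ℵ₀ ≤ κ ∧ κ.ord.cof < κ

/-- The set of non-identity elements of the free group whose reduced word begins and
ends with a letter from `{a, a⁻¹}`. -/
def beginsEndsWith (A : Type u) [DecidableEq A] (a : A) : Set (FreeGroup A) :=
  {g | g ≠ 1 ∧ (g.toWord.head?.map Prod.fst) = some a ∧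
    (g.toWord.getLast?.map Prod.fst) = some a}

namespace FreeGroup
variable {α : Type*}

theorem IsReduced.cons {x : α × Bool} {L : List (α × Bool)} (hL : IsReduced L)
    (h : L.head? ≠ some (x.1, !x.2)) : IsReduced (x :: L) := by
  refine List.isChain_cons.2 ⟨fun y hy hxy => ?_, hL⟩
  by_contra hne
  exact h (Option.mem_def.1 hy ▸
    congrArg some (Prod.ext hxy.symm (Bool.eq_not_iff.2 (Ne.symm hne))))

theorem IsReduced.concat {x : α × Bool} {L : List (α × Bool)} (hL : IsReduced L)
    (h : L.getLast? ≠ some (x.1, !x.2)) : IsReduced (L ++ [x]) := by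
  refine hL.append IsReduced.singleton fun y hy z hz hyz => ?_
  obtain rfl : z = x := by simpa [eq_comm] using hz
  by_contra hne
  exact h (Option.mem_def.1 hy ▸ congrArg some (Prod.ext hyz (Bool.eq_not_iff.2 hne)))

variable [DecidableEq α]

theorem toWord_mk_singleton_mul {x : α × Bool} {g : FreeGroup α}
    (h : g.toWord.head? ≠ some (x.1, !x.2)) : (mk [x] * g).toWord = x :: g.toWord := by
  rw [toWord_mul, toWord_mk, reduce_singleton, List.singleton_append,
    (isReduced_toWord.cons h).reduce_eq]

theorem toWord_mul_mk_singleton {x : α × Bool} {g : FreeGroup α}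
    (h : g.toWord.getLast? ≠ some (x.1, !x.2)) : (g * mk [x]).toWord = g.toWord ++ [x] := by
  rw [toWord_mul, toWord_mk, reduce_singleton, (isReduced_toWord.concat h).reduce_eq]

theorem toWord_of_mul_of_toWord_eq_cons {b : α} {g : FreeGroup α} {w : List (α × Bool)}
    (hw : g.toWord = (b, false) :: w) : (of b * g).toWord = w := by
  rw [toWord_mul, toWord_of, List.singleton_append, reduce.cons, reduce_toWord, hw]
  simp

theorem head?_toWord_of_pow_mul {b : α} {n : ℕ} {g : FreeGroup α}
    (h : g.toWord.head? = some (b, true) ∨ g.toWord.count (b, false) < n) :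
    (of b ^ n * g).toWord.head? = some (b, true) := by
  induction n generalizing g with
  | zero => simpa using h
  | succ n ih =>
    rw [pow_succ, mul_assoc]
    apply ih
    by_cases hg : g.toWord.head? = some (b, false)
    · right
      obtain ⟨w, hw⟩ : ∃ w, g.toWord = (b, false) :: w := by
        cases hg' : g.toWord <;> simp_all
      rw [toWord_of_mul_of_toWord_eq_cons hw]
      simpa [hw] using h
    · left
      rw [of, toWord_mk_singleton_mul (x := (b, true)) hg, List.head?_cons]

end FreeGroup

theorem RightThick.leftThick_inv [Group G] {κ : Cardinal.{u}} {T : Set G}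
    (h : RightThick κ T) : LeftThick κ T⁻¹ := by
  intro F hF
  obtain ⟨t, ht, hsub⟩ := h F⁻¹ (by rwa [Cardinal.mk_inv])
  refine ⟨t⁻¹, by simpa, ?_⟩
  rintro _ ⟨f, hf, _, rfl, rfl⟩
  rw [Set.mem_inv, mul_inv_rev, inv_inv]
  exact hsub (Set.mul_mem_mul rfl (Set.inv_mem_inv.2 hf))

open FreeGroup

section
variable {A : Type u} [DecidableEq A]

theorem beginsEndsWith_inv (a : A) : (beginsEndsWith A a)⁻¹ = beginsEndsWith A a := by
  ext g
  simp only [beginsEndsWith, Set.mem_inv, Set.mem_ofPred_eq, toWord_inv, invRev,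
    List.head?_reverse, List.getLast?_reverse, List.getLast?_map, List.head?_map, Option.map_map]
  exact and_congr inv_ne_one and_comm

theorem exists_ne_forall_notMem_toWord {F : Set (FreeGroup A)} (hF₀ : ℵ₀ ≤ #F)
    (hF : #F < #(FreeGroup A)) (a : A) : ∃ b ≠ a, ∀ f ∈ F, (b, false) ∉ f.toWord := by
  have : Nonempty A := ⟨a⟩
  have hFA : #F < #A := by
    rw [mk_freeGroup, lt_max_iff] at hF
    exact hF.resolve_right hF₀.not_gt
  set U : Set A := ⋃ f ∈ F, {x | (x, false) ∈ f.toWord}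
  have hU : #U ≤ #F := calc
    #U ≤ #F * ⨆ f : F, #{x | (x, false) ∈ f.1.toWord} := mk_biUnion_le _ _
    _ ≤ #F * ℵ₀ := by
      gcongr
      exact ciSup_le' fun f =>
        (f.1.toWord.finite_toSet.preimage (Prod.mk_left_injective false).injOn).lt_aleph0.le
    _ = #F := mul_aleph0_eq hF₀
  have hAU : #(insert a U : Set A) < #A :=
    mk_insert_le.trans_lt (add_lt_of_lt (hF₀.trans hFA.le) (hU.trans_lt hFA)
      (one_lt_aleph0.trans_le (hF₀.trans hFA.le)))
  obtain ⟨b, hb⟩ := compl_nonempty_of_mk_lt_mk hAU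
  simp only [Set.mem_compl_iff, Set.mem_insert_iff, not_or, U, Set.mem_iUnion] at hb
  exact ⟨b, hb.1, fun f hf hbf => hb.2 ⟨f, hf, hbf⟩⟩

theorem exists_ne_forall_count_lt (hA : 1 < #A) (a : A) {F : Set (FreeGroup A)}
    (hF : #F < #(FreeGroup A)) :
    ∃ b ≠ a, ∃ n, 0 < n ∧ ∀ f ∈ F, f.toWord.count (b, false) < n := by
  by_cases hfin : F.Finite
  · have : Nontrivial A := one_lt_iff_nontrivial.1 hA
    obtain ⟨b, hb⟩ := exists_ne a
    obtain ⟨M, hM⟩ := (hfin.image fun f => f.toWord.count (b, false)).bddAbove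
    exact ⟨b, hb, M + 1, M.succ_pos, fun f hf => Nat.lt_succ_of_le (hM ⟨f, hf, rfl⟩)⟩
  · obtain ⟨b, hb, hfresh⟩ := exists_ne_forall_notMem_toWord
      (not_lt.1 (mt lt_aleph0_iff_set_finite.1 hfin)) hF a
    exact ⟨b, hb, 1, one_pos, fun f hf => by simp [List.count_eq_zero.2 (hfresh f hf)]⟩

theorem notMem_beginsEndsWith_of_head? {a : A} {g : FreeGroup A}
    (h : g.toWord.head?.map Prod.fst ≠ some a) : g ∉ beginsEndsWith A a :=
  fun hg => h hg.2.1

theorem rightThick_compl_beginsEndsWith (hA : 1 < #A) (a : A) :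
    RightThick #(FreeGroup A) (beginsEndsWith A a)ᶜ := by
  intro F hF
  obtain ⟨b, hba, n, hn, hcount⟩ := exists_ne_forall_count_lt hA a hF
  have key (g : FreeGroup A) (hg : g.toWord.count (b, false) < n) :
      of b ^ n * g ∉ beginsEndsWith A a :=
    notMem_beginsEndsWith_of_head? (by simpa [head?_toWord_of_pow_mul (Or.inr hg)] using hba)
  refine ⟨of b ^ n, by simpa using key 1 (by simpa), ?_⟩
  rw [Set.singleton_mul, Set.image_subset_iff]
  exact fun f hf => key f (hcount f hf)

theorem exists_mul_mul_mem_beginsEndsWith (a : A) (g : FreeGroup A) :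
    ∃ s₁ s₂ : Bool, mk [(a, s₁)] * g * mk [(a, s₂)] ∈ beginsEndsWith A a := by
  have avoid (o : Option (A × Bool)) : ∃ s : Bool, o ≠ some (a, !s) := by
    by_cases h : o = some (a, true)
    exacts [⟨true, by simp [h]⟩, ⟨false, by simpa using h⟩]
  obtain ⟨s₂, h₂⟩ := avoid g.toWord.getLast?
  obtain ⟨s₁, h₁⟩ := avoid (g * mk [(a, s₂)]).toWord.head?
  have hw := toWord_mk_singleton_mul (x := (a, s₁)) h₁
  rw [toWord_mul_mk_singleton h₂] at hw
  refine ⟨s₁, s₂, ?_⟩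
  rw [mul_assoc]
  simp [beginsEndsWith, ← toWord_eq_nil_iff, hw, List.getLast?_cons, List.getLast?_append]

theorem not_kThick_compl_beginsEndsWith {κ : Cardinal.{u}} (hκ : 2 < κ) (a : A) :
    ¬ KThick κ (beginsEndsWith A a)ᶜ := by
  intro h
  set F : Set (FreeGroup A) := {mk [(a, true)], mk [(a, false)]}
  have hF : #F ≤ 2 := mk_insert_le.trans (by rw [mk_singleton, one_add_one_eq_two])
  obtain ⟨t, -, hsub⟩ := h F (hF.trans_lt hκ)
  obtain ⟨s₁, s₂, hmem⟩ := exists_mul_mul_mem_beginsEndsWith a t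
  have hmk (s : Bool) : mk [(a, s)] ∈ F := by cases s <;> simp [F]
  exact hsub (Set.mul_mem_mul (Set.mul_mem_mul (hmk s₁) rfl) (hmk s₂)) hmem

end

/-- For a free group `F_A` with `|A| > 1` there is a subset `T`
(namely the complement of `beginsEndsWith A a` for a fixed `a ∈ A`) which is both left
and right `κ`-thick, yet not `κ`-thick, where `κ = |F_A|`. -/
theorem exists_leftRightThick_not_thick (A : Type u) [DecidableEq A]
    (hA : 1 < #A) (a : A) :
    ∃ T : Set (FreeGroup A), T = (beginsEndsWith A a)ᶜ ∧
      LeftThick (#(FreeGroup A)) T ∧ RightThick (#(FreeGroup A)) T ∧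
      ¬ KThick (#(FreeGroup A)) T := by
  have : Nonempty A := ⟨a⟩
  have hright := rightThick_compl_beginsEndsWith hA a
  refine ⟨_, rfl, ?_, hright, not_kThick_compl_beginsEndsWith ?_ a⟩
  · simpa [Set.compl_inv, beginsEndsWith_inv] using hright.leftThick_inv
  · exact ofNat_lt_aleph0.trans_le (aleph0_le_mk _)
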